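/- arXiv:2011.05530 — 9 statements merged into one kernel-verified Lean document; each statement's English description precedes it below -/
import Mathlib

section
/- Let a, b be real numbers with b - a ≥ 4, and let f : ℝ → ℝ be continuous on [a, b]. If f is uniformly approximable on [a, b] by polynomials with integer coefficients (i.e., for every ε > 0 there exists a polynomial p with integer coefficients such that |f(x) - p(x)| ≤ ε for all x ∈ [a, b]), then f coincides on [a, b] with a polynomial with integer coefficients: there exists a polynomial p ∈ ℤ[X] such that f(x) = p(x) for all x ∈ [a, b]. -/
/-!
Rescaling the interval `[a, a + 4]` to `[-1, 1]` multiplies the leading coefficient of a polynomial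
of degree `n` by `2 ^ n`, while Chebyshev's extremal property bounds the leading coefficient of a
polynomial bounded by `1` on `[-1, 1]` by `2 ^ (n - 1)`. Hence a nonzero integer polynomial, whose
leading coefficient is at least `1` in absolute value, takes a value of absolute value at least `1`
on any interval of length `4`. So two integer polynomials that both approximate `f` within `1/3`
coincide, and `f` agrees with each of them.
-/

open Polynomial Set

namespace Polynomial

theorem abs_leadingCoeff_le_of_forall_abs_le_one {P : ℝ[X]}
    (hP : ∀ x ∈ Icc (-1 : ℝ) 1, |P.eval x| ≤ 1) :
    |P.leadingCoeff| ≤ 2 ^ (P.natDegree - 1) := by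
  have hneg : ∀ x ∈ Icc (-1 : ℝ) 1, |(-P).eval x| ≤ 1 := by simpa only [eval_neg, abs_neg]
  have upper := Chebyshev.leadingCoeff_le_of_forall_abs_le_one degree_le_natDegree hP
  have lower := Chebyshev.leadingCoeff_le_of_forall_abs_le_one
    (degree_le_natDegree.trans_eq (by rw [natDegree_neg])) hneg
  rw [leadingCoeff_neg] at lower
  exact abs_le.2 ⟨by linarith, upper⟩

theorem abs_leadingCoeff_mul_le_of_forall_abs_le_one {a b : ℝ} (hab : a < b) {P : ℝ[X]}
    (hP : ∀ x ∈ Icc a b, |P.eval x| ≤ 1) :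
    |P.leadingCoeff| * ((b - a) / 2) ^ P.natDegree ≤ 2 ^ (P.natDegree - 1) := by
  set s := (b - a) / 2
  have hs : 0 < s := by positivity
  set L : ℝ[X] := C s * X + C ((a + b) / 2)
  have hL : L.natDegree = 1 := natDegree_linear hs.ne'
  have hQ : ∀ t ∈ Icc (-1 : ℝ) 1, |(P.comp L).eval t| ≤ 1 := by
    intro t ⟨ht₁, ht₂⟩
    rw [eval_comp]
    refine hP _ ⟨?_, ?_⟩ <;> simp only [L, eval_add, eval_mul, eval_C, eval_X, s] <;> nlinarith
  have := abs_leadingCoeff_le_of_forall_abs_le_one hQ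
  rwa [leadingCoeff_comp (by rw [hL]; exact one_ne_zero), natDegree_comp, hL, mul_one,
    leadingCoeff_linear hs.ne', abs_mul, abs_pow, abs_of_pos hs] at this

theorem eq_zero_of_forall_abs_aeval_lt_one {a b : ℝ} (hab : 4 ≤ b - a) {q : ℤ[X]}
    (hq : ∀ x ∈ Icc a b, |aeval x q| < 1) : q = 0 := by
  by_contra hq₀
  set P : ℝ[X] := q.map (algebraMap ℤ ℝ)
  have hinj : Function.Injective (algebraMap ℤ ℝ) := Int.cast_injective
  have hPq : ∀ x, P.eval x = aeval x q := eval_map_algebraMap q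
  have hlc : 1 ≤ |P.leadingCoeff| := by
    rw [leadingCoeff_map_of_injective hinj, eq_intCast]
    exact_mod_cast Int.one_le_abs (leadingCoeff_ne_zero.2 hq₀)
  rcases Nat.eq_zero_or_pos P.natDegree with hdeg | hdeg
  · have ha : a ∈ Icc a b := ⟨le_rfl, by linarith⟩
    have hconst : P.eval a = P.leadingCoeff := by
      conv_lhs => rw [eq_C_of_natDegree_eq_zero hdeg]
      rw [eval_C, leadingCoeff, hdeg]
    have := hq a ha
    rw [← hPq, hconst] at this
    linarith
  · have hbound := abs_leadingCoeff_mul_le_of_forall_abs_le_one (by linarith)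
      fun x hx ↦ (hPq x ▸ hq x hx).le
    have hwidth : (2 : ℝ) ^ P.natDegree ≤ ((b - a) / 2) ^ P.natDegree :=
      pow_le_pow_left₀ zero_le_two (by linarith) _
    have hhalf : (2 : ℝ) ^ (P.natDegree - 1) < 2 ^ P.natDegree :=
      pow_lt_pow_right₀ one_lt_two (Nat.sub_lt hdeg one_pos)
    exact (calc (2 : ℝ) ^ P.natDegree = 1 * 2 ^ P.natDegree := (one_mul _).symm
      _ ≤ |P.leadingCoeff| * ((b - a) / 2) ^ P.natDegree :=
          mul_le_mul hlc hwidth (by positivity) (by positivity)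
      _ ≤ 2 ^ (P.natDegree - 1) := hbound
      _ < 2 ^ P.natDegree := hhalf).false

theorem eq_of_forall_abs_aeval_sub_lt_one {a b : ℝ} (hab : 4 ≤ b - a) {p q : ℤ[X]}
    (h : ∀ x ∈ Icc a b, |aeval x p - aeval x q| < 1) : p = q :=
  sub_eq_zero.1 <| eq_zero_of_forall_abs_aeval_lt_one hab fun x hx ↦ by
    simpa only [map_sub] using h x hx

end Polynomial

theorem integer_poly_approx_on_long_interval_general (a b : ℝ) (hab : b - a ≥ 4) (f : ℝ → ℝ)
    (happrox : ∀ ε : ℝ, ε > 0 → ∃ p : Polynomial ℤ,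
      ∀ x ∈ Set.Icc a b, |f x - Polynomial.aeval x p| ≤ ε) :
    ∃ p : Polynomial ℤ, ∀ x ∈ Set.Icc a b, f x = Polynomial.aeval x p := by
  obtain ⟨p, hp⟩ := happrox (1 / 3) (by norm_num)
  refine ⟨p, fun x hx ↦ eq_of_forall_dist_le fun ε hε ↦ ?_⟩
  obtain ⟨p', hp'⟩ := happrox (min ε (1 / 3)) (lt_min hε (by norm_num))
  have hpp' : p = p' := eq_of_forall_abs_aeval_sub_lt_one hab fun y hy ↦ by
    have h₁ := abs_le.1 (hp y hy)
    have h₂ := abs_le.1 ((hp' y hy).trans (min_le_right _ _))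
    exact abs_lt.2 ⟨by linarith, by linarith⟩
  rw [Real.dist_eq, hpp']
  exact (hp' x hx).trans (min_le_left _ _)

/-- If `f` is continuous on `[a, b]` with `b - a ≥ 4` and is uniformly approximable on
`[a, b]` by polynomials with integer coefficients, then `f` coincides on `[a, b]` with a
polynomial with integer coefficients. -/
theorem integer_poly_approx_on_long_interval (a b : ℝ) (hab : b - a ≥ 4) (f : ℝ → ℝ)
    (hf : ContinuousOn f (Set.Icc a b))
    (happrox : ∀ ε : ℝ, ε > 0 → ∃ p : Polynomial ℤ,
      ∀ x ∈ Set.Icc a b, |f x - Polynomial.aeval x p| ≤ ε) :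
    ∃ p : Polynomial ℤ, ∀ x ∈ Set.Icc a b, f x = Polynomial.aeval x p :=
  integer_poly_approx_on_long_interval_general a b hab f happrox
end

section
/- Let f : ℝ → ℝ be continuous on [-1, 1]. If f is uniformly approximable on [-1, 1] by polynomials with integer coefficients, then f(-1), f(0), and f(1) are integers, and the integer f(1) - f(-1) is even. -/
lemma int_of_approx (y : ℝ) (h : ∀ ε : ℝ, ε > 0 → ∃ n : ℤ, |y - n| ≤ ε) :
    ∃ m : ℤ, y = m := by
  obtain ⟨n, hn⟩ := h (1/3) (by norm_num)
  refine ⟨n, ?_⟩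
  have key : ∀ ε : ℝ, ε > 0 → |y - n| ≤ ε := by
    intro ε hε
    obtain ⟨n', hn'⟩ := h (min ε (1/3)) (by positivity)
    have h1 : |y - (n':ℝ)| ≤ 1/3 := hn'.trans (min_le_right _ _)
    have h2 : |(n:ℝ) - n'| < 1 := by
      calc |(n:ℝ) - n'| ≤ |(n:ℝ) - y| + |y - n'| := abs_sub_le _ _ _
        _ = |y - n| + |y - n'| := by rw [abs_sub_comm]
        _ < 1 := by linarith
    have h3 : n = n' := by
      have : |((n - n' : ℤ) : ℝ)| < 1 := by push_cast; exact h2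
      have : |n - n'| < 1 := by exact_mod_cast this
      have := abs_lt.mp this
      omega
    rw [h3]
    exact hn'.trans (min_le_left _ _)
  by_contra hne
  have hpos : |y - n| > 0 := by
    rcases lt_or_eq_of_le (abs_nonneg (y - (n:ℝ))) with h | h
    · exact h
    · exact absurd (by linarith [abs_eq_zero.mp h.symm] : y = n) hne
  linarith [key (|y - n|/2) (by linarith)]

/-- If `f` is continuous on `[-1, 1]` and uniformly approximable there by polynomials with
integer coefficients, then `f (-1)`, `f 0`, `f 1` are integers and `f 1 - f (-1)` is even. -/
theorem integer_poly_approx_necessary_conditions (f : ℝ → ℝ)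
    (hf : ContinuousOn f (Set.Icc (-1 : ℝ) 1))
    (happrox : ∀ ε : ℝ, ε > 0 → ∃ p : Polynomial ℤ,
      ∀ x ∈ Set.Icc (-1 : ℝ) 1, |f x - Polynomial.aeval x p| ≤ ε) :
    (∃ m : ℤ, f (-1) = m) ∧ (∃ m : ℤ, f 0 = m) ∧ (∃ m : ℤ, f 1 = m) ∧
      (∃ k : ℤ, f 1 - f (-1) = 2 * k) := by
  have haev : ∀ (p : Polynomial ℤ) (m : ℤ),
      Polynomial.aeval ((m : ℤ) : ℝ) p = ((p.eval m : ℤ) : ℝ) := by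
    intro p m
    rw [Polynomial.aeval_def, Polynomial.eval₂_at_intCast]
    simp
  have hpt : ∀ m : ℤ, (m:ℝ) ∈ Set.Icc (-1:ℝ) 1 → ∃ k : ℤ, f m = k := by
    intro m hm
    apply int_of_approx
    intro ε hε
    obtain ⟨p, hp⟩ := happrox ε hε
    exact ⟨p.eval m, by simpa [haev p m] using hp (m:ℝ) hm⟩
  have hm1 := hpt (-1) (by norm_num)
  have h0 := hpt 0 (by norm_num)
  have h1 := hpt 1 (by norm_num)
  push_cast at hm1 h0 h1
  refine ⟨hm1, h0, h1, ?_⟩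
  have heven : ∃ m : ℤ, (f 1 - f (-1))/2 = m := by
    apply int_of_approx
    intro ε hε
    obtain ⟨p, hp⟩ := happrox ε hε
    have ha := hp 1 (by norm_num)
    have hb := hp (-1) (by norm_num)
    have he : ∃ k : ℤ, p.eval 1 - p.eval (-1) = 2 * k := by
      have h2 : (2:ℤ) ∣ p.eval 1 - p.eval (-1) := by
        have := Polynomial.sub_dvd_eval_sub (1:ℤ) (-1) p
        norm_num at this
        exact this
      exact ⟨(p.eval 1 - p.eval (-1))/2, by omega⟩
    obtain ⟨k, hk⟩ := he
    refine ⟨k, ?_⟩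
    have e1 : Polynomial.aeval (1:ℝ) p = ((p.eval 1 : ℤ) : ℝ) := by
      simpa using haev p 1
    have e2 : Polynomial.aeval (-1:ℝ) p = ((p.eval (-1) : ℤ) : ℝ) := by
      simpa using haev p (-1)
    rw [e1] at ha; rw [e2] at hb
    have hkk : ((p.eval 1 : ℤ) : ℝ) - ((p.eval (-1) : ℤ) : ℝ) = 2*k := by
      rw [← Int.cast_sub, hk]; push_cast; ring
    rw [abs_le] at ha hb ⊢
    constructor <;> [linarith [ha.1, hb.2]; linarith [ha.2, hb.1]]
  obtain ⟨m, hm⟩ := heven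
  exact ⟨m, by linarith⟩
end

section
/- Let f : ℝ → ℝ be continuous on [-1, 1]. If f(-1), f(0), and f(1) are integers and f(1) - f(-1) is an even integer, then f is uniformly approximable on [-1, 1] by polynomials with integer coefficients. -/
/-!
Subtracting the integer quadratic that interpolates `f` at `-1, 0, 1` (its coefficients are
integers exactly because `f 1 - f (-1)` is even) reduces the theorem to a continuous `g` vanishing
at the three nodes. By Weierstrass such a `g` is uniformly close to polynomials `(x³ - x) ρ(x)`
with `ρ ∈ ℝ[X]`, so it suffices that `c (x³ - x)` is approximable for every real `c`.

This works for any `h ∈ ℤ[X]` with `|h| ≤ r < 1` on `s`: if `n r^{2m} ≤ 1` and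
`E = 1 - n h^{2m}`, then `0 ≤ E ≤ 1` on `s`, the integer polynomial
`h^{2m+1} (1 + E + ⋯ + E^{k-1})` equals `(h - h E^k) / n`, and `h E^k → 0` uniformly on `s`.
Hence every `h / n` is approximable, and so is `c h`, as `c` is within `1 / n` of `ℤ / n`.
-/

open Polynomial Set

def IntPolyApproximable (s : Set ℝ) (f : ℝ → ℝ) : Prop :=
  ∀ ε : ℝ, ε > 0 → ∃ p : ℤ[X], ∀ x ∈ s, |f x - aeval x p| ≤ ε

namespace IntPolyApproximable

variable {s : Set ℝ} {f g : ℝ → ℝ}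

theorem of_forall_near
    (h : ∀ ε > 0, ∃ g, IntPolyApproximable s g ∧ ∀ x ∈ s, |f x - g x| ≤ ε) :
    IntPolyApproximable s f := by
  intro ε hε
  obtain ⟨g, hg, hfg⟩ := h (ε / 2) (by positivity)
  obtain ⟨p, hp⟩ := hg (ε / 2) (by positivity)
  refine ⟨p, fun x hx => ?_⟩
  calc |f x - aeval x p| ≤ |f x - g x| + |g x - aeval x p| := abs_sub_le _ _ _
    _ ≤ ε / 2 + ε / 2 := add_le_add (hfg x hx) (hp x hx)
    _ = ε := add_halves ε

theorem add (hf : IntPolyApproximable s f) (hg : IntPolyApproximable s g) :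
    IntPolyApproximable s (fun x => f x + g x) := by
  intro ε hε
  obtain ⟨p, hp⟩ := hf (ε / 2) (by positivity)
  obtain ⟨q, hq⟩ := hg (ε / 2) (by positivity)
  refine ⟨p + q, fun x hx => ?_⟩
  calc |f x + g x - aeval x (p + q)| = |(f x - aeval x p) + (g x - aeval x q)| := by
        rw [map_add]; ring_nf
    _ ≤ ε / 2 + ε / 2 := (abs_add_le _ _).trans (add_le_add (hp x hx) (hq x hx))
    _ = ε := add_halves ε

theorem intCast_mul (hf : IntPolyApproximable s f) (a : ℤ) :
    IntPolyApproximable s (fun x => a * f x) := by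
  intro ε hε
  obtain ⟨p, hp⟩ := hf (ε / (|(a : ℝ)| + 1)) (by positivity)
  refine ⟨C a * p, fun x hx => ?_⟩
  calc |a * f x - aeval x (C a * p)| = |(a : ℝ)| * |f x - aeval x p| := by
        rw [← abs_mul]; simp [mul_sub]
    _ ≤ (|(a : ℝ)| + 1) * (ε / (|(a : ℝ)| + 1)) := by
        gcongr
        · linarith
        · exact hp x hx
    _ = ε := mul_div_cancel₀ _ (by positivity)

theorem aeval_mul (hs : IsCompact s) (hf : IntPolyApproximable s f) (q : ℤ[X]) :
    IntPolyApproximable s (fun x => aeval x q * f x) := by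
  obtain ⟨M, hM⟩ := hs.exists_bound_of_continuousOn (q.continuous_aeval (A := ℝ)).continuousOn
  intro ε hε
  obtain ⟨p, hp⟩ := hf (ε / (|M| + 1)) (by positivity)
  refine ⟨q * p, fun x hx => ?_⟩
  calc |aeval x q * f x - aeval x (q * p)| = |aeval x q| * |f x - aeval x p| := by
        rw [← abs_mul, map_mul, mul_sub]
    _ ≤ (|M| + 1) * (ε / (|M| + 1)) := by
        gcongr
        · have := hM x hx
          rw [Real.norm_eq_abs] at this
          linarith [le_abs_self M]
        · exact hp x hx
    _ = ε := mul_div_cancel₀ _ (by positivity)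

end IntPolyApproximable

theorem abs_mul_one_sub_mul_pow_le {H ε : ℝ} {n m k : ℕ} (hn : 0 < n) (hH : |H| ≤ 1)
    (hnH : n * (H ^ 2) ^ m ≤ 1) (hε : 0 ≤ ε) (hk : (1 - (ε ^ 2) ^ m) ^ k ≤ ε) :
    |H * (1 - n * (H ^ 2) ^ m) ^ k| ≤ ε := by
  have hn1 : (1 : ℝ) ≤ n := Nat.one_le_cast.2 hn
  have he0 : 0 ≤ 1 - n * (H ^ 2) ^ m := sub_nonneg.2 hnH
  have he1 : 1 - n * (H ^ 2) ^ m ≤ 1 := by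
    have : 0 ≤ (H ^ 2) ^ m := by positivity
    nlinarith
  rw [abs_mul, abs_of_nonneg (pow_nonneg he0 k)]
  rcases le_or_gt |H| ε with hHε | hεH
  · calc |H| * (1 - n * (H ^ 2) ^ m) ^ k ≤ ε * 1 :=
          mul_le_mul hHε (pow_le_one₀ he0 he1) (by positivity) hε
      _ = ε := mul_one ε
  · have hεH2 : (ε ^ 2) ^ m ≤ (H ^ 2) ^ m :=
      pow_le_pow_left₀ (sq_nonneg ε) (by nlinarith [sq_abs H]) m
    have : 1 - n * (H ^ 2) ^ m ≤ 1 - (ε ^ 2) ^ m := by nlinarith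
    calc |H| * (1 - n * (H ^ 2) ^ m) ^ k ≤ 1 * (1 - (ε ^ 2) ^ m) ^ k := by gcongr
      _ ≤ ε := by rw [one_mul]; exact hk

section

variable {s : Set ℝ} {h : ℤ[X]} {r : ℝ}

theorem intPolyApproximable_aeval_div_natCast (hr : r < 1) (hh : ∀ x ∈ s, |aeval x h| ≤ r)
    {n : ℕ} (hn : 0 < n) :
    IntPolyApproximable s (fun x => aeval x h / n) := by
  obtain ⟨m, hm⟩ : ∃ m : ℕ, (max r 0 ^ 2) ^ m < 1 / n :=
    exists_pow_lt_of_lt_one (by positivity) (by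
      have := max_lt hr one_pos
      have := le_max_right r 0
      nlinarith)
  have hsmall : ∀ x ∈ s, n * ((aeval x h) ^ 2) ^ m ≤ 1 := fun x hx => by
    have : (aeval x h ^ 2) ^ m ≤ (max r 0 ^ 2) ^ m := by
      refine pow_le_pow_left₀ (sq_nonneg _) ?_ m
      rw [← sq_abs]
      exact pow_le_pow_left₀ (abs_nonneg _) ((hh x hx).trans (le_max_left r 0)) 2
    rw [lt_div_iff₀ (by positivity)] at hm
    nlinarith
  intro ε hε
  obtain ⟨k, hk⟩ : ∃ k : ℕ, (1 - (ε ^ 2) ^ m) ^ k < ε :=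
    exists_pow_lt_of_lt_one hε (by have := pow_pos (pow_pos hε 2) m; linarith)
  set E : ℤ[X] := 1 - n * (h ^ 2) ^ m
  refine ⟨h * (h ^ 2) ^ m * ∑ i ∈ Finset.range k, E ^ i, fun x hx => ?_⟩
  set H := aeval x h
  have hE : aeval x E = 1 - n * (H ^ 2) ^ m := by simp [E, H]
  -- since `n (h²)ᵐ = 1 - E`, the approximant telescopes to `h (1 - Eᵏ) / n`
  have herr : H / n - aeval x (h * (h ^ 2) ^ m * ∑ i ∈ Finset.range k, E ^ i)
      = H * aeval x E ^ k / n := by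
    have hpow : (H ^ 2) ^ m = (1 - aeval x E) / n := by rw [hE]; field_simp; ring
    have hsum : aeval x (h * (h ^ 2) ^ m * ∑ i ∈ Finset.range k, E ^ i)
        = H * (H ^ 2) ^ m * ∑ i ∈ Finset.range k, aeval x E ^ i := by simp [H]
    rw [hsum, hpow]
    linear_combination (-H / n) * mul_neg_geom_sum (aeval x E) k
  rw [herr, hE, abs_div, Nat.abs_cast]
  refine (div_le_self (abs_nonneg _) (Nat.one_le_cast.2 hn)).trans ?_
  exact abs_mul_one_sub_mul_pow_le hn ((hh x hx).trans hr.le) (hsmall x hx) hε.le hk.le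

theorem intPolyApproximable_const_mul_aeval (hr : r < 1) (hh : ∀ x ∈ s, |aeval x h| ≤ r)
    (c : ℝ) :
    IntPolyApproximable s (fun x => c * aeval x h) := by
  refine IntPolyApproximable.of_forall_near fun ε hε => ?_
  obtain ⟨n, hn⟩ := exists_nat_gt (1 / ε)
  have hn0 : 0 < n := by exact_mod_cast (one_div_pos.2 hε).trans hn
  set a := ⌊c * n⌋
  refine ⟨fun x => a * (aeval x h / n),
    (intPolyApproximable_aeval_div_natCast hr hh hn0).intCast_mul a, fun x hx => ?_⟩
  have hca : |c - a / n| ≤ ε := by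
    have hn' : (0 : ℝ) < n := by exact_mod_cast hn0
    have h1 := Int.floor_le (c * n)
    have h2 := Int.lt_floor_add_one (c * n)
    have hfloor : a / n ≤ c := (div_le_iff₀ hn').2 h1
    have hceil : c < a / n + 1 / n := by
      rw [← add_div, lt_div_iff₀ hn']; exact h2
    have hinv : 1 / (n : ℝ) < ε := (one_div_lt hε hn').1 hn
    rw [abs_le]
    constructor <;> linarith
  calc |c * aeval x h - a * (aeval x h / n)| = |c - a / n| * |aeval x h| := by
        rw [← abs_mul]; ring_nf
    _ ≤ ε * 1 := mul_le_mul hca ((hh x hx).trans hr.le) (abs_nonneg _) hε.le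
    _ = ε := mul_one ε

theorem intPolyApproximable_aeval_mul_eval (hs : IsCompact s) (hr : r < 1)
    (hh : ∀ x ∈ s, |aeval x h| ≤ r) (ρ : ℝ[X]) :
    IntPolyApproximable s (fun x => aeval x h * ρ.eval x) := by
  induction ρ using Polynomial.induction_on' with
  | add p q hp hq => simpa only [eval_add, mul_add] using hp.add hq
  | monomial j c =>
    simpa only [eval_monomial, map_pow, aeval_X, mul_comm, mul_left_comm, mul_assoc] using
      (intPolyApproximable_const_mul_aeval hr hh c).aeval_mul hs (X ^ j)

end

theorem abs_pow_three_sub_self_le {x : ℝ} (hx : x ∈ Icc (-1 : ℝ) 1) :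
    |x ^ 3 - x| ≤ 1 / 2 := by
  obtain ⟨h1, h2⟩ := hx
  rw [abs_le]
  constructor <;> nlinarith [mul_nonneg (sub_nonneg.2 h2) (sq_nonneg (x + 1 / 2)),
    mul_nonneg (neg_le_iff_add_nonneg.1 h1) (sq_nonneg (x - 1 / 2))]

theorem X_pow_three_sub_X_dvd {p : ℝ[X]} (hm1 : p.eval (-1) = 0) (h0 : p.eval 0 = 0)
    (h1 : p.eval 1 = 0) : X ^ 3 - X ∣ p := by
  obtain ⟨q, rfl⟩ : X - C 0 ∣ p := dvd_iff_isRoot.2 h0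
  obtain ⟨q', rfl⟩ : X - C 1 ∣ q := dvd_iff_isRoot.2 (by simpa using h1)
  obtain ⟨q'', rfl⟩ : X - C (-1) ∣ q' := dvd_iff_isRoot.2 (by norm_num at hm1 ⊢; linarith)
  exact ⟨q'', by simp only [map_neg, map_one, map_zero]; ring⟩

theorem exists_X_pow_three_sub_X_dvd_near {g : ℝ → ℝ} (hg : ContinuousOn g (Icc (-1) 1))
    (hm1 : g (-1) = 0) (h0 : g 0 = 0) (h1 : g 1 = 0) {ε : ℝ} (hε : 0 < ε) :
    ∃ w : ℝ[X], X ^ 3 - X ∣ w ∧ ∀ x ∈ Icc (-1 : ℝ) 1, |g x - w.eval x| ≤ ε := by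
  obtain ⟨w, hw⟩ := exists_polynomial_near_of_continuousOn (-1) 1 g hg (ε / 4) (by positivity)
  have hw_node : ∀ a ∈ Icc (-1 : ℝ) 1, g a = 0 → |w.eval a| ≤ ε / 4 := fun a ha hga => by
    simpa [hga] using (hw a ha).le
  -- the Lagrange interpolant of `w` at the nodes `-1, 0, 1`
  set ℓ : ℝ[X] := C (w.eval (-1) / 2) * (X ^ 2 - X) + C (w.eval 0) * (1 - X ^ 2)
    + C (w.eval 1 / 2) * (X ^ 2 + X)
  have hℓ : ∀ x, ℓ.eval x = w.eval (-1) * ((x ^ 2 - x) / 2) + w.eval 0 * (1 - x ^ 2)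
      + w.eval 1 * ((x ^ 2 + x) / 2) := fun x => by simp [ℓ]; ring
  refine ⟨w - ℓ, X_pow_three_sub_X_dvd ?_ ?_ ?_, fun x hx => ?_⟩
  · rw [eval_sub, hℓ]; ring
  · rw [eval_sub, hℓ]; ring
  · rw [eval_sub, hℓ]; ring
  obtain ⟨hx1, hx2⟩ := hx
  have hℓx : |ℓ.eval x| ≤ 3 * (ε / 4) := by
    rw [hℓ]
    refine (abs_add_three _ _ _).trans ?_
    simp only [abs_mul]
    obtain ⟨hb₁, hb₂, hb₃⟩ :
        |(x ^ 2 - x) / 2| ≤ 1 ∧ |1 - x ^ 2| ≤ 1 ∧ |(x ^ 2 + x) / 2| ≤ 1 := by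
      refine ⟨abs_le.2 ⟨?_, ?_⟩, abs_le.2 ⟨?_, ?_⟩, abs_le.2 ⟨?_, ?_⟩⟩ <;> nlinarith
    have hw₁ := hw_node (-1) (by norm_num) hm1
    have hw₂ := hw_node 0 (by norm_num) h0
    have hw₃ := hw_node 1 (by norm_num) h1
    calc _ ≤ ε / 4 * 1 + ε / 4 * 1 + ε / 4 * 1 := by gcongr
      _ = 3 * (ε / 4) := by ring
  calc |g x - (w - ℓ).eval x| ≤ |g x - w.eval x| + |ℓ.eval x| := by
        rw [eval_sub, ← sub_add]; exact abs_add_le _ _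
    _ ≤ ε / 4 + 3 * (ε / 4) := by
        gcongr
        rw [abs_sub_comm]; exact (hw x ⟨hx1, hx2⟩).le
    _ = ε := by ring

theorem intPolyApproximable_Icc_of_eq_zero {g : ℝ → ℝ} (hg : ContinuousOn g (Icc (-1) 1))
    (hm1 : g (-1) = 0) (h0 : g 0 = 0) (h1 : g 1 = 0) :
    IntPolyApproximable (Icc (-1) 1) g := by
  have hcubic : ∀ x ∈ Icc (-1 : ℝ) 1, |aeval x (X ^ 3 - X : ℤ[X])| ≤ 1 / 2 := fun x hx =>
    by simpa using abs_pow_three_sub_self_le hx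
  refine IntPolyApproximable.of_forall_near fun ε hε => ?_
  obtain ⟨_, ⟨ρ, rfl⟩, hw⟩ := exists_X_pow_three_sub_X_dvd_near hg hm1 h0 h1 hε
  exact ⟨_, intPolyApproximable_aeval_mul_eval isCompact_Icc (by norm_num) hcubic ρ,
    fun x hx => by simpa using hw x hx⟩

/-- If `f` is continuous on `[-1, 1]`, takes integer values at `-1`, `0`, `1`, and
`f 1 - f (-1)` is even, then `f` is uniformly approximable on `[-1, 1]` by polynomials
with integer coefficients. -/
theorem integer_poly_approx_sufficient_conditions (f : ℝ → ℝ)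
    (hf : ContinuousOn f (Set.Icc (-1 : ℝ) 1))
    (hm1 : ∃ m : ℤ, f (-1) = m) (h0 : ∃ m : ℤ, f 0 = m) (h1 : ∃ m : ℤ, f 1 = m)
    (hparity : ∃ k : ℤ, f 1 - f (-1) = 2 * k) :
    ∀ ε : ℝ, ε > 0 → ∃ p : Polynomial ℤ,
      ∀ x ∈ Set.Icc (-1 : ℝ) 1, |f x - Polynomial.aeval x p| ≤ ε := by
  obtain ⟨a, ha⟩ := hm1
  obtain ⟨b, hb⟩ := h0
  obtain ⟨c, hc⟩ := h1
  obtain ⟨k, hk⟩ := hparity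
  -- interpolates `f` at `-1, 0, 1`
  set q : ℤ[X] := C b + C k * X + C (a + k - b) * X ^ 2
  have hq : ∀ x : ℝ, aeval x q = b + k * x + (a + k - b) * x ^ 2 := fun x => by simp [q]
  have hg : IntPolyApproximable (Icc (-1) 1) (fun x => f x - aeval x q) :=
    intPolyApproximable_Icc_of_eq_zero (hf.sub q.continuous_aeval.continuousOn)
      (by rw [hq, ha]; ring) (by rw [hq, hb]; ring) (by rw [hq, hc]; linarith)
  intro ε hε
  obtain ⟨p, hp⟩ := hg ε hε
  exact ⟨p + q, fun x hx => by simpa [sub_sub, add_comm] using hp x hx⟩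
end

section
/- The ReLU function σ_r(x) = max(x, 0) is not uniformly approximable by polynomials with integer coefficients on the interval [-1, 1]: there exists ε > 0 such that for every polynomial p with integer coefficients there is some x ∈ [-1, 1] with |max(x, 0) - p(x)| > ε. -/
/-!
Integer polynomials satisfy `p(1) ≡ p(-1) mod 2`, since `1 - (-1)` divides `p(1) - p(-1)`.
ReLU takes the values `1` and `0` at `±1`, which have different parities, so a uniform
approximation within `1/4` would put the integers `p(1)` and `p(-1)` within `1/4` of them,
forcing `|1 - p(1) + p(-1)| ≤ 1/2` for an odd integer.
-/

open Polynomial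

lemma Polynomial.aeval_intCast_eq_eval {A : Type*} [Ring A] (p : ℤ[X]) (k : ℤ) :
    aeval (k : A) p = ((p.eval k : ℤ) : A) := by
  simpa using aeval_algebraMap_apply A k p

lemma Polynomial.two_dvd_eval_one_sub_eval_neg_one {R : Type*} [CommRing R] (p : R[X]) :
    (2 : R) ∣ p.eval 1 - p.eval (-1) := by
  simpa [sub_neg_eq_add, one_add_one_eq_two] using sub_dvd_eval_sub 1 (-1) p

lemma Int.one_le_abs_one_sub_add_abs_of_two_dvd_sub {m n : ℤ} (h : 2 ∣ m - n) :
    1 ≤ |1 - m| + |n| :=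
  calc 1 ≤ |1 - m + n| := Int.one_le_abs (by omega)
    _ ≤ |1 - m| + |n| := abs_add_le _ _

/-- The ReLU function `x ↦ max x 0` is not uniformly approximable by polynomials with
integer coefficients on `[-1, 1]`. -/
theorem relu_not_integer_poly_approximable :
    ∃ ε : ℝ, ε > 0 ∧ ∀ p : Polynomial ℤ,
      ∃ x ∈ Set.Icc (-1 : ℝ) 1, |max x 0 - Polynomial.aeval x p| > ε := by
  refine ⟨1 / 4, by norm_num, fun p => ?_⟩
  by_contra! hclose
  have h_one := hclose 1 (by norm_num)
  have h_neg_one := hclose (-1) (by norm_num)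
  rw [show (1 : ℝ) = ((1 : ℤ) : ℝ) by norm_num, aeval_intCast_eq_eval] at h_one
  rw [show (-1 : ℝ) = ((-1 : ℤ) : ℝ) by norm_num, aeval_intCast_eq_eval] at h_neg_one
  have h_odd : (1 : ℝ) ≤ |1 - ((p.eval 1 : ℤ) : ℝ)| + |((p.eval (-1) : ℤ) : ℝ)| := by
    exact_mod_cast Int.one_le_abs_one_sub_add_abs_of_two_dvd_sub
      (two_dvd_eval_one_sub_eval_neg_one p)
  norm_num at h_one h_neg_one
  linarith
end

section
/- Let c be an even integer. Then the scaled ReLU function σ_sr(x; c) = max(c·x, 0) is uniformly approximable by polynomials with integer coefficients on the interval [-1, 1]: for every ε > 0 there exists a polynomial p with integer coefficients such that |max(c·x, 0) - p(x)| ≤ ε for all x ∈ [-1, 1]. -/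
/-!
Writing `c = k + k`, we have `max (c x) 0 = k x + |k| √(x²)`, so it suffices to approximate
`|k| √u` on `[0, 1]` by integer polynomials. For any continuous `f` on `[0, 1]` taking integer
values at `0` and `1`, round the coefficients `(n choose k) f (k / n)` of its `n`-th Bernstein
polynomial in the basis `X ^ k (1 - X) ^ (n - k)`. The two endpoint coefficients are already
integers and every interior one has `n ≤ n choose k`, so the rounding error is at most `1 / (2n)`
times the Bernstein partition of unity.
-/

open Polynomial unitInterval Filter

theorem Nat.le_choose_of_pos_of_lt {n k : ℕ} (hk : 0 < k) (hkn : k < n) : n ≤ n.choose k := by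
  induction n generalizing k with
  | zero => omega
  | succ n ih =>
    obtain ⟨k, rfl⟩ : ∃ j, k = j + 1 := ⟨k - 1, by omega⟩
    rcases Nat.eq_zero_or_pos k with rfl | hk0
    · simp
    · rw [Nat.choose_succ_succ']
      have := Nat.choose_pos (show k + 1 ≤ n by omega)
      have := ih hk0 (by omega)
      omega

noncomputable def roundedBernstein (n : ℕ) (f : C(I, ℝ)) : ℤ[X] :=
  ∑ k : Fin (n + 1),
    C (round (n.choose k * f (bernstein.z k))) * X ^ (k : ℕ) * (1 - X) ^ (n - k)

theorem abs_sub_round_choose_mul_le {n : ℕ} (hn : n ≠ 0) {f : C(I, ℝ)}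
    (h₀ : ∃ m : ℤ, f 0 = m) (h₁ : ∃ m : ℤ, f 1 = m) (k : Fin (n + 1)) :
    |n.choose k * f (bernstein.z k) - round (n.choose k * f (bernstein.z k))| ≤
      n.choose k / (2 * n) := by
  have hint_or_interior : (∃ m : ℤ, (n.choose k : ℝ) * f (bernstein.z k) = m) ∨
      (0 < (k : ℕ) ∧ (k : ℕ) < n) := by
    by_cases hk₀ : k = 0
    · obtain ⟨m, hm⟩ := h₀
      exact .inl ⟨m, by simp [hk₀, hm]⟩
    by_cases hk₁ : k = Fin.last n
    · obtain ⟨m, hm⟩ := h₁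
      exact .inl ⟨m, by simp [hk₁, hn, hm]⟩
    exact .inr ⟨Fin.pos_iff_ne_zero.mpr hk₀, Fin.lt_last_iff_ne_last.mpr hk₁⟩
  rcases hint_or_interior with ⟨m, hm⟩ | ⟨hk₀, hkn⟩
  · rw [hm, round_intCast, sub_self, abs_zero]
    positivity
  · have : (n : ℝ) ≤ n.choose k := by exact_mod_cast Nat.le_choose_of_pos_of_lt hk₀ hkn
    calc _ ≤ (1 : ℝ) / 2 := abs_sub_round _
      _ ≤ _ := by rw [div_le_div_iff₀ two_pos (by positivity)]; linarith

theorem abs_bernsteinApproximation_sub_aeval_roundedBernstein_le {n : ℕ} (hn : n ≠ 0)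
    {f : C(I, ℝ)} (h₀ : ∃ m : ℤ, f 0 = m) (h₁ : ∃ m : ℤ, f 1 = m) (x : I) :
    |bernsteinApproximation n f x - aeval (x : ℝ) (roundedBernstein n f)| ≤ 1 / (2 * n) := by
  set a : Fin (n + 1) → ℝ := fun k => n.choose k * f (bernstein.z k)
  have hdiff : bernsteinApproximation n f x - aeval (x : ℝ) (roundedBernstein n f) =
      ∑ k : Fin (n + 1),
        (a k - round (a k)) * ((x : ℝ) ^ (k : ℕ) * (1 - (x : ℝ)) ^ (n - k)) := by
    simp only [bernsteinApproximation.apply, roundedBernstein, bernstein_apply, map_sum, map_mul,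
      map_pow, map_sub, aeval_X, map_one, map_intCast, eq_intCast, smul_eq_mul,
      ← Finset.sum_sub_distrib, a]
    refine Finset.sum_congr rfl fun k _ => by ring
  have hw : ∀ k : ℕ, 0 ≤ (x : ℝ) ^ k * (1 - (x : ℝ)) ^ (n - k) := fun k =>
    mul_nonneg (pow_nonneg x.2.1 _) (pow_nonneg (sub_nonneg.mpr x.2.2) _)
  rw [hdiff]
  calc _ ≤ ∑ k : Fin (n + 1),
        |a k - round (a k)| * ((x : ℝ) ^ (k : ℕ) * (1 - (x : ℝ)) ^ (n - k)) := by
        refine (Finset.abs_sum_le_sum_abs _ _).trans_eq (Finset.sum_congr rfl fun k _ => ?_)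
        rw [abs_mul, abs_of_nonneg (hw k)]
    _ ≤ ∑ k : Fin (n + 1), bernstein n k x / (2 * n) := by
        refine Finset.sum_le_sum fun k _ => ?_
        calc _ ≤ n.choose k / (2 * n) * ((x : ℝ) ^ (k : ℕ) * (1 - (x : ℝ)) ^ (n - k)) :=
              mul_le_mul_of_nonneg_right (abs_sub_round_choose_mul_le hn h₀ h₁ k) (hw k)
          _ = _ := by rw [bernstein_apply]; ring
    _ = 1 / (2 * n) := by rw [← Finset.sum_div, bernstein.probability]

theorem exists_intPolynomial_abs_sub_le (f : C(I, ℝ)) (h₀ : ∃ m : ℤ, f 0 = m)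
    (h₁ : ∃ m : ℤ, f 1 = m) {ε : ℝ} (hε : 0 < ε) :
    ∃ p : ℤ[X], ∀ x : I, |f x - aeval (x : ℝ) p| ≤ ε := by
  obtain ⟨n, hB, hn, hn0⟩ := ((bernsteinApproximation_uniform f).eventually
    (Metric.ball_mem_nhds f (half_pos hε))).and
    ((tendsto_one_div_atTop_nhds_zero_nat.eventually (gt_mem_nhds hε)).and
      (eventually_ne_atTop 0)) |>.exists
  refine ⟨roundedBernstein n f, fun x => ?_⟩
  have hBx : |f x - bernsteinApproximation n f x| ≤ ε / 2 := by
    rw [← Real.dist_eq, dist_comm]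
    exact (ContinuousMap.dist_apply_le_dist x).trans (Metric.mem_ball.mp hB).le
  have hround : 1 / (2 * (n : ℝ)) ≤ ε / 2 := by
    rw [show 1 / (2 * (n : ℝ)) = 1 / n / 2 by ring]; linarith
  calc |f x - aeval (x : ℝ) (roundedBernstein n f)|
      ≤ |f x - bernsteinApproximation n f x|
        + |bernsteinApproximation n f x - aeval (x : ℝ) (roundedBernstein n f)| :=
          abs_sub_le _ _ _
    _ ≤ ε / 2 + ε / 2 := add_le_add hBx
        ((abs_bernsteinApproximation_sub_aeval_roundedBernstein_le hn0 h₀ h₁ x).trans hround)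
    _ = ε := add_halves ε

theorem max_add_self_zero_eq_add_abs (a : ℝ) : max (a + a) 0 = a + |a| := by
  rcases le_total 0 a with h | h
  · rw [abs_of_nonneg h, max_eq_left (by linarith)]
  · rw [abs_of_nonpos h, max_eq_right (by linarith)]; ring

/-- For an even integer `c`, the scaled ReLU function `x ↦ max (c • x) 0` is uniformly
approximable by polynomials with integer coefficients on `[-1, 1]`. -/
theorem scaled_relu_integer_poly_approximable (c : ℤ) (hc : Even c) :
    ∀ ε : ℝ, ε > 0 → ∃ p : Polynomial ℤ,
      ∀ x ∈ Set.Icc (-1 : ℝ) 1, |max ((c : ℝ) * x) 0 - Polynomial.aeval x p| ≤ ε := by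
  intro ε hε
  obtain ⟨k, rfl⟩ := hc
  let f : C(I, ℝ) := ⟨fun u => |(k : ℝ)| * √(u : ℝ), by fun_prop⟩
  obtain ⟨p, hp⟩ :=
    exists_intPolynomial_abs_sub_le f ⟨0, by simp [f]⟩ ⟨|k|, by simp [f]⟩ hε
  refine ⟨C k * X + p.comp (X ^ 2), fun x hx => ?_⟩
  have hx2 : x ^ 2 ∈ I := ⟨sq_nonneg x, sq_le_one_iff_abs_le_one x |>.mpr (abs_le.mpr hx)⟩
  convert hp ⟨x ^ 2, hx2⟩ using 2
  simp [f, aeval_comp, Real.sqrt_sq_eq_abs, ← abs_mul, add_mul, max_add_self_zero_eq_add_abs]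
end

section
/- Let c be a positive even integer and let α be a real number with √2 ≤ α ≤ 1.563. Then the scaled ReLU function σ_sr(x; c) = max(c·x, 0) is not uniformly approximable by polynomials with integer coefficients on the interval [-α, α]: there exists ε > 0 such that for every polynomial p with integer coefficients there is some x ∈ [-α, α] with |max(c·x, 0) - p(x)| > ε. -/
/-!
For `p ∈ ℤ[X]`, the values `p(√2)` and `p(-√2)` are conjugate in `ℤ[√2]`, so their sum is an
integer. The scaled ReLU takes the values `c√2` and `0` at `±√2`, whose sum `c√2` is irrational and
hence at some positive distance `δ` from `ℤ`. So no `p` is within `δ/3` of the function at both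
points, and `±√2 ∈ [-α, α]`.
-/

open Polynomial

theorem Zsqrtd.lift_aeval_sqrtd {R : Type*} [CommRing R] {d : ℤ} {s : R} (hs : s * s = d)
    (p : ℤ[X]) : Zsqrtd.lift ⟨s, hs⟩ (aeval (Zsqrtd.sqrtd : ℤ√d) p) = aeval s p := by
  calc Zsqrtd.lift ⟨s, hs⟩ (aeval (Zsqrtd.sqrtd : ℤ√d) p)
      = aeval ((Zsqrtd.lift ⟨s, hs⟩).toIntAlgHom Zsqrtd.sqrtd) p :=
        (aeval_algHom_apply (Zsqrtd.lift ⟨s, hs⟩).toIntAlgHom _ p).symm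
    _ = aeval s p := by simp [Zsqrtd.lift_apply_apply]

theorem aeval_add_aeval_neg_of_mul_self_eq_intCast {R : Type*} [CommRing R] {d : ℤ} {s : R}
    (hs : s * s = d) (p : ℤ[X]) :
    aeval s p + aeval (-s) p = ((2 * (aeval (Zsqrtd.sqrtd : ℤ√d) p).re : ℤ) : R) := by
  have hs' : -s * -s = d := by rw [neg_mul_neg, hs]
  rw [← Zsqrtd.lift_aeval_sqrtd hs, ← Zsqrtd.lift_aeval_sqrtd hs']
  simp only [Zsqrtd.lift_apply_apply]
  push_cast
  ring

theorem Irrational.exists_pos_forall_le_abs_sub_intCast {x : ℝ} (hx : Irrational x) :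
    ∃ δ > 0, ∀ n : ℤ, δ ≤ |x - n| :=
  ⟨|x - round x|, abs_pos.2 (sub_ne_zero.2 (hx.ne_int _)), round_le x⟩

theorem exists_pos_forall_lt_abs_sub_aeval_of_irrational_add {f : ℝ → ℝ} {d : ℤ} {s : ℝ}
    (hs : s * s = d) (hf : Irrational (f s + f (-s))) :
    ∃ ε > 0, ∀ p : ℤ[X], ε < |f s - aeval s p| ∨ ε < |f (-s) - aeval (-s) p| := by
  obtain ⟨δ, hδ, hδle⟩ := hf.exists_pos_forall_le_abs_sub_intCast
  refine ⟨δ / 3, by positivity, fun p => ?_⟩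
  by_contra! hclose
  have hfar : δ ≤ |f s + f (-s) - (aeval s p + aeval (-s) p)| := by
    rw [aeval_add_aeval_neg_of_mul_self_eq_intCast hs p]
    exact hδle _
  refine lt_irrefl δ ?_
  calc δ ≤ |f s + f (-s) - (aeval s p + aeval (-s) p)| := hfar
    _ ≤ |f s - aeval s p| + |f (-s) - aeval (-s) p| := by
        rw [add_sub_add_comm]; exact abs_add_le _ _
    _ ≤ δ / 3 + δ / 3 := add_le_add hclose.1 hclose.2
    _ < δ := by linarith

theorem scaled_relu_not_integer_poly_approximable_on_sqrt2_interval_general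
    (c : ℤ) (hcpos : 0 < c) (α : ℝ)
    (hα₁ : Real.sqrt 2 ≤ α) :
    ∃ ε : ℝ, ε > 0 ∧ ∀ p : Polynomial ℤ,
      ∃ x ∈ Set.Icc (-α) α, |max ((c : ℝ) * x) 0 - Polynomial.aeval x p| > ε := by
  set s := Real.sqrt 2
  have hs : s * s = ((2 : ℤ) : ℝ) := by push_cast; exact Real.mul_self_sqrt zero_le_two
  have hs0 : 0 ≤ s := Real.sqrt_nonneg 2
  have hc : (0 : ℝ) < c := Int.cast_pos.2 hcpos
  have hrelu : max ((c : ℝ) * s) 0 + max ((c : ℝ) * -s) 0 = c * s := by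
    rw [max_eq_left (by positivity), max_eq_right (by nlinarith)]
    ring
  have hirr : Irrational (c * s) := irrational_sqrt_two.intCast_mul hcpos.ne'
  obtain ⟨ε, hε, hfar⟩ := exists_pos_forall_lt_abs_sub_aeval_of_irrational_add
    (f := fun x => max ((c : ℝ) * x) 0) hs (by rwa [hrelu])
  refine ⟨ε, hε, fun p => ?_⟩
  rcases hfar p with h | h
  · exact ⟨s, ⟨by linarith, hα₁⟩, h⟩
  · exact ⟨-s, ⟨by linarith, by linarith⟩, h⟩

/-- For a positive even integer `c` and `√2 ≤ α ≤ 1.563`, the scaled ReLU function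
`x ↦ max (c·x) 0` is not uniformly approximable by polynomials with integer coefficients
on `[-α, α]`. -/
theorem scaled_relu_not_integer_poly_approximable_on_sqrt2_interval
    (c : ℤ) (hcpos : 0 < c) (hceven : Even c) (α : ℝ)
    (hα₁ : Real.sqrt 2 ≤ α) (hα₂ : α ≤ 1.563) :
    ∃ ε : ℝ, ε > 0 ∧ ∀ p : Polynomial ℤ,
      ∃ x ∈ Set.Icc (-α) α, |max ((c : ℝ) * x) 0 - Polynomial.aeval x p| > ε :=
  scaled_relu_not_integer_poly_approximable_on_sqrt2_interval_general c hcpos α hα₁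
end

section
/- Let a, b be real numbers with a < 0 < b and b - a ≥ 4. Then the ReLU function σ_r(x) = max(x, 0) is not uniformly approximable by polynomials with integer coefficients on the interval [a, b]: there is no sequence of integer-coefficient polynomials converging uniformly to σ_r on [a, b]. (This holds because on an interval of length at least 4 only integer-coefficient polynomials themselves can be uniformly approximated, and σ_r does not agree with any polynomial on an interval containing 0 in its interior.) -/
/-!
Pairing `R (cos θ)` with `cos (n θ)` on `[0, π]` kills every monomial of degree below
`n = deg R` and leaves `π / 2 ^ n` times the leading coefficient. Hence a real polynomial bounded
by `ε` on an interval of length `4` (mapped affinely onto `[-1, 1]`) has leading coefficient at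
most `ε` in absolute value, so a nonzero integer polynomial has sup norm at least `1` there.
Two integer polynomials approximating the same function to within `1/4` must therefore coincide,
so a function uniformly approximable by integer polynomials on such an interval is itself an
integer polynomial there. The ReLU is not: it vanishes on `[a, 0]` but not at `b`.
-/

open Real Polynomial Set

noncomputable def cosMoment (j : ℕ) (ν : ℝ) : ℝ :=
  ∫ θ in (0 : ℝ)..π, cos θ ^ j * cos (ν * θ)

lemma intervalIntegrable_cos_pow_mul_cos (j : ℕ) (ν : ℝ) :
    IntervalIntegrable (fun θ => cos θ ^ j * cos (ν * θ)) MeasureTheory.volume 0 π :=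
  (by fun_prop : Continuous fun θ => cos θ ^ j * cos (ν * θ)).intervalIntegrable _ _

lemma cosMoment_zero_natCast {n : ℕ} (hn : n ≠ 0) : cosMoment 0 n = 0 := by
  have hn' : (n : ℝ) ≠ 0 := Nat.cast_ne_zero.mpr hn
  simp only [cosMoment, pow_zero, one_mul]
  rw [intervalIntegral.integral_comp_mul_left cos hn']
  simp [integral_cos, sin_nat_mul_pi]

lemma cosMoment_zero_zero : cosMoment 0 0 = π := by
  simp [cosMoment]

lemma cosMoment_succ (j : ℕ) (ν : ℝ) :
    cosMoment (j + 1) ν = (cosMoment j (ν + 1) + cosMoment j (ν - 1)) / 2 := by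
  have product_to_sum : ∀ θ, cos θ ^ (j + 1) * cos (ν * θ)
      = (cos θ ^ j * cos ((ν + 1) * θ) + cos θ ^ j * cos ((ν - 1) * θ)) / 2 := by
    intro θ
    rw [add_mul, sub_mul, one_mul, cos_add, cos_sub]
    ring
  simp only [cosMoment, product_to_sum, intervalIntegral.integral_div,
    intervalIntegral.integral_add (intervalIntegrable_cos_pow_mul_cos _ _)
      (intervalIntegrable_cos_pow_mul_cos _ _)]

lemma cosMoment_of_lt {j n : ℕ} (h : j < n) : cosMoment j n = 0 := by
  induction j generalizing n with
  | zero => exact cosMoment_zero_natCast h.ne'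
  | succ j ih =>
    obtain ⟨m, rfl⟩ : ∃ m, n = m + 1 := Nat.exists_eq_succ_of_ne_zero (by omega)
    rw [cosMoment_succ, Nat.cast_add_one, add_sub_cancel_right, ← Nat.cast_add_one,
      ← Nat.cast_add_one, ih (by omega), ih (by omega)]
    simp

lemma cosMoment_self (n : ℕ) : cosMoment n n = π / 2 ^ n := by
  induction n with
  | zero => simpa using cosMoment_zero_zero
  | succ n ih =>
    rw [cosMoment_succ, Nat.cast_add_one, add_sub_cancel_right, ← Nat.cast_add_one,
      ← Nat.cast_add_one, cosMoment_of_lt (by omega), ih]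
    ring

lemma integral_eval_cos_mul_cos_natDegree (R : ℝ[X]) :
    ∫ θ in (0 : ℝ)..π, R.eval (cos θ) * cos (R.natDegree * θ)
      = R.leadingCoeff * (π / 2 ^ R.natDegree) := by
  set n := R.natDegree
  have expand : ∀ θ, R.eval (cos θ) * cos (n * θ)
      = ∑ j ∈ Finset.range (n + 1), R.coeff j * (cos θ ^ j * cos (n * θ)) := by
    intro θ
    rw [eval_eq_sum_range, Finset.sum_mul]
    exact Finset.sum_congr rfl fun j _ => by ring
  simp only [expand]
  rw [intervalIntegral.integral_finsetSum
    fun j _ => (intervalIntegrable_cos_pow_mul_cos j n).const_mul _]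
  simp only [intervalIntegral.integral_const_mul]
  rw [Finset.sum_eq_single_of_mem n (Finset.self_mem_range_succ n)]
  · exact congrArg₂ _ rfl (cosMoment_self n)
  · intro j hj hjn
    rw [show (∫ θ in (0 : ℝ)..π, cos θ ^ j * cos (n * θ)) = cosMoment j n from rfl,
      cosMoment_of_lt (lt_of_le_of_ne (Finset.mem_range_succ_iff.mp hj) hjn), mul_zero]

lemma abs_leadingCoeff_le_of_abs_eval_cos_le (R : ℝ[X]) {ε : ℝ}
    (h : ∀ θ, |R.eval (cos θ)| ≤ ε) : |R.leadingCoeff| ≤ 2 ^ R.natDegree * ε := by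
  have hbound := intervalIntegral.norm_integral_le_of_norm_le_const (a := 0) (b := π)
    (f := fun θ => R.eval (cos θ) * cos (R.natDegree * θ)) (C := ε) fun θ _ => by
      rw [norm_mul, Real.norm_eq_abs, Real.norm_eq_abs]
      exact (mul_le_of_le_one_right (abs_nonneg _) (abs_cos_le_one _)).trans (h θ)
  have h2 : (0 : ℝ) < 2 ^ R.natDegree := by positivity
  rw [integral_eval_cos_mul_cos_natDegree, Real.norm_eq_abs, abs_mul,
    abs_of_pos (div_pos pi_pos h2), sub_zero, abs_of_pos pi_pos, mul_div_assoc',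
    div_le_iff₀ h2, mul_right_comm] at hbound
  rw [mul_comm (2 ^ _)]
  exact le_of_mul_le_mul_right hbound pi_pos

lemma abs_leadingCoeff_mul_pow_le_of_abs_eval_le (Q : ℝ[X]) {c r ε : ℝ} (hr : 0 < r)
    (h : ∀ x ∈ Icc (c - r) (c + r), |Q.eval x| ≤ ε) :
    |Q.leadingCoeff| * r ^ Q.natDegree ≤ 2 ^ Q.natDegree * ε := by
  have hlin : (C r * X + C c).natDegree = 1 := natDegree_linear hr.ne'
  have hR := abs_leadingCoeff_le_of_abs_eval_cos_le (Q.comp (C r * X + C c)) (ε := ε)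
    fun θ => by
      rw [eval_comp]
      refine h _ ⟨?_, ?_⟩ <;> simp <;> nlinarith [neg_one_le_cos θ, cos_le_one θ]
  rwa [natDegree_comp, hlin, mul_one, leadingCoeff_comp (by rw [hlin]; exact one_ne_zero),
    leadingCoeff_linear hr.ne', abs_mul, abs_of_pos (pow_pos hr _)] at hR

lemma one_le_of_abs_aeval_le {q : ℤ[X]} (hq : q ≠ 0) {a b ε : ℝ} (hab : 4 ≤ b - a)
    (h : ∀ x ∈ Icc a b, |aeval x q| ≤ ε) : 1 ≤ ε := by
  have hinj : Function.Injective (algebraMap ℤ ℝ) := (algebraMap ℤ ℝ).injective_int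
  set Q := q.map (algebraMap ℤ ℝ)
  have hQ := abs_leadingCoeff_mul_pow_le_of_abs_eval_le Q (c := (a + b) / 2) (r := 2)
    two_pos fun x hx => by
      rw [eval_map_algebraMap]
      exact h x ⟨by linarith [hx.1], by linarith [hx.2]⟩
  have hlc : (1 : ℝ) ≤ |Q.leadingCoeff| := by
    rw [leadingCoeff_map_of_injective hinj, algebraMap_int_eq, eq_intCast, ← Int.cast_abs]
    exact_mod_cast Int.one_le_abs (leadingCoeff_ne_zero.mpr hq)
  rw [mul_comm] at hQ
  nlinarith [le_of_mul_le_mul_left hQ (by positivity : (0 : ℝ) < 2 ^ Q.natDegree)]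

lemma exists_eqOn_aeval_of_forall_approx {f : ℝ → ℝ} {a b : ℝ} (hab : 4 ≤ b - a)
    (happrox : ∀ ε > 0, ∃ p : ℤ[X], ∀ x ∈ Icc a b, |f x - aeval x p| ≤ ε) :
    ∃ p : ℤ[X], EqOn f (fun x => aeval x p) (Icc a b) := by
  obtain ⟨p, hp⟩ := happrox (1 / 4) (by norm_num)
  refine ⟨p, fun x hx => eq_of_forall_dist_le fun ε hε => ?_⟩
  obtain ⟨q, hq⟩ := happrox (min ε (1 / 4)) (by positivity)
  -- Two integer polynomials within `1/4` of `f` are within `1/2` of each other, hence equal.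
  have hpq : p = q := by
    by_contra hne
    refine absurd (one_le_of_abs_aeval_le (sub_ne_zero.mpr hne) hab (ε := 1 / 2) fun y hy => ?_)
      (by norm_num)
    rw [map_sub]
    have := abs_sub_le (aeval y p) (f y) (aeval y q)
    rw [abs_sub_comm (aeval y p) (f y)] at this
    linarith [hp y hy, hq y hy, min_le_right ε (1 / 4)]
  subst hpq
  exact (hq x hx).trans (min_le_left _ _)

lemma not_eqOn_max_zero_eval {a b : ℝ} (ha : a < 0) (hb : 0 < b) (P : ℝ[X]) :
    ¬ EqOn (fun x => max x 0) P.eval (Icc a b) := by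
  intro hP
  have hzero : P = 0 := P.eq_zero_of_infinite_isRoot <| (Icc_infinite ha).mono fun x hx => by
    simp [IsRoot, ← hP ⟨hx.1, hx.2.trans hb.le⟩, hx.2]
  have := hP ⟨by linarith, le_rfl⟩
  simp [hzero, hb.le] at this
  linarith

/-- For `a < 0 < b` with `b - a ≥ 4`, the ReLU function `x ↦ max x 0` is not uniformly
approximable by polynomials with integer coefficients on `[a, b]`. -/
theorem relu_not_integer_poly_approximable_on_long_interval (a b : ℝ)
    (ha : a < 0) (hb : 0 < b) (hab : b - a ≥ 4) :
    ¬ ∀ ε : ℝ, ε > 0 → ∃ p : Polynomial ℤ,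
      ∀ x ∈ Set.Icc a b, |max x 0 - Polynomial.aeval x p| ≤ ε := by
  intro happrox
  obtain ⟨p, hp⟩ := exists_eqOn_aeval_of_forall_approx hab happrox
  exact not_eqOn_max_zero_eval ha hb (p.map (algebraMap ℤ ℝ)) fun x hx =>
    (hp hx).trans (eval_map_algebraMap p x).symm
end

section
/- Let a > 0 and define p₂(x) = x²/(2a) + x/2 + a/16. Then the supremum of |max(x, 0) - p₂(x)| over x ∈ [-a, a] equals a/16; that is, |max(x, 0) - (x²/(2a) + x/2 + a/16)| ≤ a/16 for all x ∈ [-a, a], and this bound a/16 is attained (in particular at x = -a, x = -a/2, x = 0, x = a/2, and x = a, with alternating signs of the error). -/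
/-!
Writing `max x 0 = (x + |x|) / 2` and `x ^ 2 = |x| ^ 2`, the error is a function of `t = |x|`
alone, namely `a / 16 - (t - a / 2) ^ 2 / (2 * a)`. On `0 ≤ t ≤ a` the square `(t - a / 2) ^ 2`
ranges over `[0, a ^ 2 / 4]`, so the error ranges over `[-a / 16, a / 16]`, with the top value at
`t = a / 2` and the bottom value at `t = 0` and `t = a`.
-/

lemma max_zero_sub_quadratic_eq (a x : ℝ) (ha : a ≠ 0) :
    max x 0 - (x ^ 2 / (2 * a) + x / 2 + a / 16) = a / 16 - (|x| - a / 2) ^ 2 / (2 * a) := by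
  have hmax : max x 0 = (x + |x|) / 2 := by
    rcases le_total x 0 with hx | hx
    · rw [max_eq_right hx, abs_of_nonpos hx]; ring
    · rw [max_eq_left hx, abs_of_nonneg hx]; ring
  rw [hmax, ← sq_abs x]
  field_simp
  ring

lemma abs_sub_sq_div_le {a t : ℝ} (ha : 0 < a) (ht₀ : 0 ≤ t) (ht₁ : t ≤ a) :
    |a / 16 - (t - a / 2) ^ 2 / (2 * a)| ≤ a / 16 := by
  have hsq : (t - a / 2) ^ 2 ≤ a ^ 2 / 4 := by nlinarith
  have hle : (t - a / 2) ^ 2 / (2 * a) ≤ a / 8 := by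
    rw [div_le_iff₀ (by positivity)]; nlinarith
  have hnonneg : 0 ≤ (t - a / 2) ^ 2 / (2 * a) := by positivity
  rw [abs_le]
  constructor <;> linarith

/-- For `a > 0` and `p₂(x) = x²/(2a) + x/2 + a/16`, the approximation error
`|max x 0 - p₂(x)|` is at most `a/16` on `[-a, a]`, and the bound is attained at
`-a`, `-a/2`, `0`, `a/2`, `a` with alternating signs of the error. -/
theorem relu_minimax_quadratic_error (a : ℝ) (ha : 0 < a) :
    (∀ x ∈ Set.Icc (-a) a,
        |max x 0 - (x ^ 2 / (2 * a) + x / 2 + a / 16)| ≤ a / 16) ∧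
      max (-a) 0 - ((-a) ^ 2 / (2 * a) + (-a) / 2 + a / 16) = -(a / 16) ∧
      max (-(a / 2)) 0 - ((-(a / 2)) ^ 2 / (2 * a) + (-(a / 2)) / 2 + a / 16) = a / 16 ∧
      max (0 : ℝ) 0 - ((0 : ℝ) ^ 2 / (2 * a) + (0 : ℝ) / 2 + a / 16) = -(a / 16) ∧
      max (a / 2) 0 - ((a / 2) ^ 2 / (2 * a) + (a / 2) / 2 + a / 16) = a / 16 ∧
      max a 0 - (a ^ 2 / (2 * a) + a / 2 + a / 16) = -(a / 16) := by
  have ha₀ : a ≠ 0 := ha.ne'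
  have habs_a : |a| = a := abs_of_pos ha
  have habs_half : |a / 2| = a / 2 := abs_of_pos (half_pos ha)
  simp only [max_zero_sub_quadratic_eq a _ ha₀, abs_neg, abs_zero, habs_a, habs_half]
  refine ⟨fun x hx => abs_sub_sq_div_le ha (abs_nonneg x) (abs_le.mpr hx), ?_, ?_, ?_, ?_, ?_⟩ <;>
    field_simp <;> ring
end

section
/- Let a > 0. For every real polynomial p of degree at most 2, the supremum of |max(x, 0) - p(x)| over x ∈ [-a, a] is at least a/16. Consequently, p₂(x) = x²/(2a) + x/2 + a/16 is a minimax degree-2 polynomial approximation of the ReLU function on [-a, a], with minimax error exactly a/16. -/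
open Polynomial

/-- For `a > 0`, every real polynomial of degree at most `2` has uniform approximation
error at least `a/16` to the ReLU function on `[-a, a]`; consequently
`p₂(x) = x²/(2a) + x/2 + a/16` is a minimax degree-2 approximation, with minimax error
exactly `a/16`. -/
theorem relu_minimax_quadratic_lower_bound (a : ℝ) (ha : 0 < a) :
    (∀ p : Polynomial ℝ, p.degree ≤ 2 →
        ∃ x ∈ Set.Icc (-a) a, a / 16 ≤ |max x 0 - p.eval x|) ∧
      ∀ x ∈ Set.Icc (-a) a,
        |max x 0 - (x ^ 2 / (2 * a) + x / 2 + a / 16)| ≤ a / 16 := by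
  constructor
  · intro p hp
    by_contra hcon
    push_neg at hcon
    have hnd : p.natDegree ≤ 2 := Polynomial.natDegree_le_iff_degree_le.mpr hp
    have heval : ∀ x : ℝ, p.eval x = p.coeff 0 + p.coeff 1 * x + p.coeff 2 * x ^ 2 := by
      intro x
      rw [Polynomial.eval_eq_sum_range' (lt_of_le_of_lt hnd (by norm_num : (2:ℕ) < 3))]
      simp [Finset.sum_range_succ]
    have h1 := hcon (-a) ⟨le_refl _, by linarith⟩
    have h2 := hcon (-(a/2)) ⟨by linarith, by linarith⟩
    have h3 := hcon 0 ⟨by linarith, by linarith⟩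
    have h4 := hcon (a/2) ⟨by linarith, by linarith⟩
    have h5 := hcon a ⟨by linarith, le_refl _⟩
    rw [heval, max_eq_right (by linarith), abs_lt] at h1
    rw [heval, max_eq_right (by linarith), abs_lt] at h2
    rw [heval, max_eq_left (le_refl _), abs_lt] at h3
    rw [heval, max_eq_left (by linarith), abs_lt] at h4
    rw [heval, max_eq_left (by linarith), abs_lt] at h5
    obtain ⟨h1l, h1r⟩ := h1
    obtain ⟨h2l, h2r⟩ := h2
    obtain ⟨h3l, h3r⟩ := h3
    obtain ⟨h4l, h4r⟩ := h4
    obtain ⟨h5l, h5r⟩ := h5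
    nlinarith [h1l, h2r, h3l, h4r, h5l]
  · intro x hx
    have h2a : (0:ℝ) < 2 * a := by linarith
    have ht : x ^ 2 / (2 * a) * (2 * a) = x ^ 2 := div_mul_cancel₀ _ (ne_of_gt h2a)
    rcases le_or_gt 0 x with hx0 | hx0
    · rw [max_eq_left hx0, abs_le]
      constructor <;> nlinarith [sq_nonneg (x - a / 2), hx.2, ht, h2a]
    · rw [max_eq_right hx0.le, abs_le]
      constructor <;> nlinarith [sq_nonneg (x + a / 2), hx.1, ht, h2a]
end
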